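/- arXiv:1302.6874 — 3 statements merged into one kernel-verified Lean document; each statement's English description precedes it below -/
import Mathlib

section
/- Let π be a prime number, n a positive even integer, and r an odd integer with r² ≡ 1 (mod πn); set k' = (r² − 1)/(πn). Then gcd(r + 1, πn) · gcd(r − 1, πn) = 2π · gcd(k'·(n/2), n). -/
/-!
Write `r = 2t + 1` and `πn = 2m`. Since `t` and `t + 1` are coprime,
`gcd(r + 1, 2m) · gcd(r - 1, 2m) = 4 · gcd(t(t + 1), m)`, while `r² - 1 = 4t(t + 1) = 2k'm` gives
`2 · gcd(t(t + 1), m) = gcd(2t(t + 1), 2m) = gcd(k'm, 2m) = m · gcd(k', 2)`.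
The right-hand side is `2π · gcd(k'(n/2), 2(n/2)) = 2π(n/2) · gcd(k', 2) = 2m · gcd(k', 2)` as well.
-/

theorem Int.gcd_mul_of_isCoprime {a b : ℤ} (m : ℤ) (h : IsCoprime a b) :
    Int.gcd (a * b) m = Int.gcd a m * Int.gcd b m := by
  have hab : Nat.Coprime a.natAbs b.natAbs := Int.isCoprime_iff_gcd_eq_one.mp h
  change Nat.gcd (a * b).natAbs m.natAbs = Nat.gcd a.natAbs m.natAbs * Nat.gcd b.natAbs m.natAbs
  rw [Int.natAbs_mul, Nat.gcd_comm, Nat.Coprime.gcd_mul _ hab, Nat.gcd_comm, Nat.gcd_comm m.natAbs]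

theorem Int.two_mul_gcd_of_two_mul_eq {x m k : ℤ} (h : 2 * x = k * m) :
    2 * Int.gcd x m = Int.gcd k 2 * m.natAbs := by
  have h2 := Int.gcd_mul_left 2 x m
  rw [h, Int.gcd_mul_right] at h2
  exact h2.symm

theorem Int.gcd_add_one_mul_gcd_sub_one_of_odd {r m k : ℤ} (hr : Odd r)
    (h : r ^ 2 - 1 = k * (2 * m)) :
    Int.gcd (r + 1) (2 * m) * Int.gcd (r - 1) (2 * m) = 2 * (Int.gcd k 2 * m.natAbs) := by
  obtain ⟨t, rfl⟩ := hr
  have hcop : IsCoprime (t + 1) t := ⟨1, -1, by ring⟩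
  have hkey : 2 * ((t + 1) * t) = k * m := by linarith
  calc Int.gcd (2 * t + 1 + 1) (2 * m) * Int.gcd (2 * t + 1 - 1) (2 * m)
      = Int.gcd (2 * (t + 1)) (2 * m) * Int.gcd (2 * t) (2 * m) := by ring_nf
    _ = 2 * (2 * Int.gcd ((t + 1) * t) m) := by
        rw [Int.gcd_mul_left, Int.gcd_mul_left, Int.gcd_mul_of_isCoprime m hcop]
        ring
    _ = 2 * (Int.gcd k 2 * m.natAbs) := by rw [Int.two_mul_gcd_of_two_mul_eq hkey]

theorem stmt7_general (p n : ℕ) (hne : Even n) (r : ℤ) (hr : Odd r)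
    (hrr : r ^ 2 ≡ 1 [ZMOD ((p : ℤ) * n)]) (k' : ℤ) (hk' : k' = (r ^ 2 - 1) / ((p : ℤ) * n)) :
    Int.gcd (r + 1) ((p : ℤ) * n) * Int.gcd (r - 1) ((p : ℤ) * n) =
      2 * p * Int.gcd (k' * ((n / 2 : ℕ) : ℤ)) (n : ℤ) := by
  obtain ⟨s, rfl⟩ := hne
  have hs : (s + s) / 2 = s := by omega
  have hN : ((p : ℤ) * ↑(s + s)) = 2 * (p * s) := by push_cast; ring
  have hk : r ^ 2 - 1 = k' * (2 * (p * s)) := by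
    rw [hk', ← hN, Int.ediv_mul_cancel hrr.symm.dvd]
  rw [hN, Int.gcd_add_one_mul_gcd_sub_one_of_odd hr hk, hs,
    show ((s + s : ℕ) : ℤ) = 2 * s by push_cast; ring, Int.gcd_mul_right]
  simp only [Int.natAbs_mul, Int.natAbs_natCast]
  ring

theorem stmt7 (p n : ℕ) (hp : p.Prime) (hn : 0 < n) (hne : Even n) (r : ℤ) (hr : Odd r)
    (hrr : r ^ 2 ≡ 1 [ZMOD ((p : ℤ) * n)]) (k' : ℤ) (hk' : k' = (r ^ 2 - 1) / ((p : ℤ) * n)) :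
    Int.gcd (r + 1) ((p : ℤ) * n) * Int.gcd (r - 1) ((p : ℤ) * n) =
      2 * p * Int.gcd (k' * ((n / 2 : ℕ) : ℤ)) (n : ℤ) :=
  stmt7_general p n hne r hr hrr k' hk'
end

section
/- Let π be a prime number, n a positive even integer, and r an odd integer with r² ≡ 1 (mod πn); set k' = (r² − 1)/(πn). Then 2·(πn / gcd(r + 1, πn)) = gcd(r − 1, πn) if and only if k' is even. -/
/-!
Write `r = 2u + 1` and `πn = 2M`. Then `gcd(r - 1, πn) = 2 gcd(u, M)`,
`gcd(r + 1, πn) = 2 gcd(u + 1, M)` and `k' = 2u(u + 1)/M`, so both sides say `M ∣ u(u + 1)`: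
for the left side this is because `u` and `u + 1` are coprime, so that
`gcd(u, M) · gcd(u + 1, M) = M` exactly when `M ∣ u(u + 1)`.
-/

theorem Nat.div_gcd_eq_gcd_iff_dvd_mul {M a b : ℕ} (hM : 0 < M) (hab : a.Coprime b) :
    M / M.gcd b = M.gcd a ↔ M ∣ a * b := by
  rw [Nat.div_eq_iff_eq_mul_left (Nat.gcd_pos_of_pos_left _ hM) (Nat.gcd_dvd_left _ _), eq_comm,
    Nat.gcd_mul_gcd_eq_iff_dvd_mul_of_coprime hab]

theorem Int.div_gcd_eq_gcd_iff_dvd_mul {M : ℕ} {a b : ℤ} (hM : 0 < M) (hab : IsCoprime a b) :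
    M / Int.gcd b M = Int.gcd a M ↔ (M : ℤ) ∣ a * b := by
  rw [Int.isCoprime_iff_gcd_eq_one, Int.gcd_eq_natAbs] at hab
  rw [Int.gcd_eq_natAbs, Int.gcd_eq_natAbs, Int.natAbs_natCast, Nat.gcd_comm, Nat.gcd_comm a.natAbs,
    ← Int.natAbs_dvd_natAbs, Int.natAbs_mul, Int.natAbs_natCast]
  exact Nat.div_gcd_eq_gcd_iff_dvd_mul hM hab

theorem Int.even_odd_sq_sub_one_div_iff {u M : ℤ} (h : 2 * M ∣ (2 * u + 1) ^ 2 - 1) :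
    Even (((2 * u + 1) ^ 2 - 1) / (2 * M)) ↔ M ∣ u * (u + 1) := by
  rw [even_iff_two_dvd, Int.dvd_div_iff_mul_dvd h, show (2 * u + 1) ^ 2 - 1 = 4 * (u * (u + 1)) by ring,
    show 2 * M * 2 = 4 * M by ring]
  exact mul_dvd_mul_iff_left (by norm_num)

theorem stmt8 (p n : ℕ) (hp : p.Prime) (hn : 0 < n) (hne : Even n) (r : ℤ) (hr : Odd r)
    (hrr : r ^ 2 ≡ 1 [ZMOD ((p : ℤ) * n)]) (k' : ℤ) (hk' : k' = (r ^ 2 - 1) / ((p : ℤ) * n)) :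
    2 * (p * n / Int.gcd (r + 1) ((p : ℤ) * n)) = Int.gcd (r - 1) ((p : ℤ) * n) ↔
      Even k' := by
  obtain ⟨m, rfl⟩ := hne
  obtain ⟨u, rfl⟩ := hr
  subst hk'
  have hM : 0 < p * m := Nat.mul_pos hp.pos (by omega)
  have hN : ((p * (m + m) : ℕ) : ℤ) = 2 * ((p * m : ℕ) : ℤ) := by push_cast; ring
  rw [← Nat.cast_mul, hN] at hrr ⊢
  rw [show p * (m + m) = 2 * (p * m) by ring, show 2 * u + 1 + 1 = 2 * (u + 1) by ring,
    show 2 * u + 1 - 1 = 2 * u by ring, Int.gcd_mul_left, Int.gcd_mul_left,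
    Int.even_odd_sq_sub_one_div_iff hrr.symm.dvd, ← Int.div_gcd_eq_gcd_iff_dvd_mul hM ⟨-1, 1, by ring⟩]
  simp only [Int.reduceAbs, Nat.mul_div_mul_left _ _ two_pos, Nat.mul_left_cancel_iff two_pos]
end

section
/- Let m be a positive even integer and r an integer with r² ≡ 1 (mod m), and set w = m / gcd(r + 1, m). Then the affine map e^{w}.r : ℤ_m → ℤ_m, x ↦ r·x + w, is a quasipolarity if and only if 2·(m / gcd(r + 1, m)) = gcd(r − 1, m). -/
/-!
Write `d = gcd(r + 1, m)`, `w = m / d` and `g = gcd(r - 1, m)`. The map `x ↦ r x + w` is always an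
involution, because `r² ≡ 1` and `(r + 1) w = ((r + 1) / d) m ≡ 0 (mod m)`. It has a fixed point iff
`(r - 1) x ≡ -w` is solvable, i.e. iff `g ∣ w`. From `m ∣ (r + 1)(r - 1)` one gets `w ∣ g`, and since
`gcd(d, g) ∣ gcd(r + 1, r - 1) ∣ 2` and `lcm(d, g) ∣ m`, also `d g ∣ 2 m`, i.e. `g ∣ 2 w`. So `g` is `w`
or `2 w`, and the map is fixed-point free exactly when `g = 2 w`.
-/

/-- The affine map `e^a.b : ZMod m → ZMod m`, `x ↦ b*x + a`. -/
def affineMap (m : ℕ) (a b : ℤ) : ZMod m → ZMod m :=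
  fun x => (b : ZMod m) * x + (a : ZMod m)

/-- `e^a.b` is a quasipolarity if it is an involution without fixed points. -/
def IsQuasipolarity (m : ℕ) (a b : ℤ) : Prop :=
  (affineMap m a b) ∘ (affineMap m a b) = id ∧ ∀ x : ZMod m, affineMap m a b x ≠ x

/-- The canonical injection `ι : ZMod n → ZMod (p*n)`, sending the class of `x`
modulo `n` to the class of `p*x` modulo `p*n`. -/
def iota (p n : ℕ) (x : ZMod n) : ZMod (p * n) := ((p * x.val : ℕ) : ZMod (p * n))

theorem Int.div_gcd_dvd_gcd_of_dvd_mul {a b : ℤ} {m : ℕ} (hm : m ≠ 0) (h : (m : ℤ) ∣ a * b) :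
    m / Int.gcd a m ∣ Int.gcd b m := by
  have hd : Int.gcd a m ∣ m := Int.natCast_dvd_natCast.mp (Int.gcd_dvd_right a m)
  have hdpos : 0 < Int.gcd a m := Int.gcd_pos_of_ne_zero_right a (by exact_mod_cast hm)
  have hmb : m ∣ Int.gcd a m * b.natAbs := by
    rw [← Int.gcd_mul_right]
    exact Int.dvd_gcd h (dvd_mul_right _ _)
  have hwb : ((m / Int.gcd a m : ℕ) : ℤ) ∣ b :=
    Int.natCast_dvd.mpr ((Nat.div_dvd_iff_dvd_mul hd hdpos).mpr hmb)
  exact Int.dvd_gcd hwb (Int.natCast_dvd_natCast.mpr (Nat.div_dvd_of_dvd hd))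

theorem Int.gcd_mul_gcd_dvd_gcd_mul (a b : ℤ) (m : ℕ) :
    Int.gcd a m * Int.gcd b m ∣ Int.gcd a b * m := by
  rw [← Nat.gcd_mul_lcm]
  refine mul_dvd_mul (Int.dvd_gcd ?_ ?_) (Nat.lcm_dvd ?_ ?_)
  · exact (Int.natCast_dvd_natCast.mpr (Nat.gcd_dvd_left _ _)).trans (Int.gcd_dvd_left a m)
  · exact (Int.natCast_dvd_natCast.mpr (Nat.gcd_dvd_right _ _)).trans (Int.gcd_dvd_left b m)
  · exact Int.natCast_dvd_natCast.mp (Int.gcd_dvd_right a m)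
  · exact Int.natCast_dvd_natCast.mp (Int.gcd_dvd_right b m)

theorem Int.gcd_add_one_sub_one_dvd_two (r : ℤ) : Int.gcd (r + 1) (r - 1) ∣ 2 := by
  have h := Int.dvd_sub (Int.gcd_dvd_left (r + 1) (r - 1)) (Int.gcd_dvd_right (r + 1) (r - 1))
  rw [add_sub_sub_cancel, one_add_one_eq_two] at h
  exact_mod_cast h

theorem Int.dvd_mul_div_gcd (a : ℤ) (m : ℕ) : (m : ℤ) ∣ a * (m / Int.gcd a m : ℕ) := by
  have hd : Int.gcd a m ∣ m := Int.natCast_dvd_natCast.mp (Int.gcd_dvd_right a m)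
  set d := Int.gcd a m
  obtain ⟨u, hu⟩ : (d : ℤ) ∣ a := Int.gcd_dvd_left a m
  refine ⟨u, ?_⟩
  rw [hu, mul_comm _ u, mul_assoc, ← Nat.cast_mul, Nat.mul_div_cancel' hd, mul_comm]

theorem Nat.eq_two_mul_iff_not_dvd {w g : ℕ} (hw : 0 < w) (hwg : w ∣ g) (hgw : g ∣ 2 * w) :
    g = 2 * w ↔ ¬ g ∣ w := by
  obtain ⟨c, rfl⟩ := hwg
  have hc : c ∣ 2 := (Nat.mul_dvd_mul_iff_left hw).mp (by rwa [mul_comm w 2])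
  rcases (Nat.dvd_prime Nat.prime_two).mp hc with rfl | rfl
  · simp [hw.ne']
  · refine ⟨fun _ h => ?_, fun _ => mul_comm w 2⟩
    have := Nat.le_of_dvd hw h
    omega

theorem affineMap_comp_self_eq_id {m : ℕ} {a b : ℤ} (hb : (b : ZMod m) ^ 2 = 1)
    (hab : ((b : ZMod m) + 1) * a = 0) : affineMap m a b ∘ affineMap m a b = id := by
  funext x
  simp only [affineMap, Function.comp_apply, id_eq]
  linear_combination x * hb + hab

theorem exists_affineMap_eq_self_iff (m : ℕ) (a b : ℤ) :
    (∃ x, affineMap m a b x = x) ↔ (Int.gcd (b - 1) m : ℤ) ∣ a := by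
  have hfix (x : ℤ) : affineMap m a b x = x ↔ (m : ℤ) ∣ (b - 1) * x + a := by
    rw [← ZMod.intCast_zmod_eq_zero_iff_dvd, ← sub_eq_zero, affineMap]
    push_cast
    ring_nf
  rw [ZMod.intCast_surjective.exists]
  simp_rw [hfix]
  constructor
  · rintro ⟨x, hx⟩
    have h := Int.dvd_sub ((Int.gcd_dvd_right (b - 1) m).trans hx)
      ((Int.gcd_dvd_left (b - 1) m).mul_right x)
    rwa [add_sub_cancel_left] at h
  · rintro ⟨c, rfl⟩
    refine ⟨-(Int.gcdA (b - 1) m * c), Int.gcdB (b - 1) m * c, ?_⟩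
    rw [Int.gcd_eq_gcd_ab]
    ring

theorem isQuasipolarity_iff_of_comp_self_eq_id {m : ℕ} {a b : ℤ}
    (h : affineMap m a b ∘ affineMap m a b = id) :
    IsQuasipolarity m a b ↔ ¬ ∃ x, affineMap m a b x = x := by
  simp [IsQuasipolarity, h]

theorem stmt10_general (m : ℕ) (hm : 0 < m) (r : ℤ)
    (hr : r ^ 2 ≡ 1 [ZMOD (m : ℤ)]) (w : ℕ) (hw : w = m / Int.gcd (r + 1) (m : ℤ)) :
    IsQuasipolarity m (w : ℤ) r ↔
      2 * (m / Int.gcd (r + 1) (m : ℤ)) = Int.gcd (r - 1) (m : ℤ) := by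
  rw [← hw]
  have hdpos : 0 < Int.gcd (r + 1) m := Int.gcd_pos_of_ne_zero_right _ (by exact_mod_cast hm.ne')
  have hdw : Int.gcd (r + 1) m * w = m :=
    hw ▸ Nat.mul_div_cancel' (Int.natCast_dvd_natCast.mp (Int.gcd_dvd_right _ _))
  have hwpos : 0 < w := Nat.pos_of_mul_pos_left (hdw ▸ hm)
  have hmr : (m : ℤ) ∣ (r + 1) * (r - 1) := by
    simpa [← sq_sub_sq, one_pow] using hr.symm.dvd
  have hwg : w ∣ Int.gcd (r - 1) m := hw ▸ Int.div_gcd_dvd_gcd_of_dvd_mul hm.ne' hmr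
  have hgw : Int.gcd (r - 1) m ∣ 2 * w := by
    refine (Nat.mul_dvd_mul_iff_left hdpos).mp ?_
    calc Int.gcd (r + 1) m * Int.gcd (r - 1) m ∣ Int.gcd (r + 1) (r - 1) * m :=
          Int.gcd_mul_gcd_dvd_gcd_mul _ _ _
      _ ∣ 2 * m := Nat.mul_dvd_mul_right (Int.gcd_add_one_sub_one_dvd_two r) m
      _ = Int.gcd (r + 1) m * (2 * w) := by rw [mul_left_comm, hdw]
  have hinv : affineMap m w r ∘ affineMap m w r = id := by
    refine affineMap_comp_self_eq_id ?_ ?_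
    · exact_mod_cast (ZMod.intCast_eq_intCast_iff _ _ m).mpr hr
    · exact_mod_cast (ZMod.intCast_zmod_eq_zero_iff_dvd _ m).mpr
        (hw ▸ Int.dvd_mul_div_gcd (r + 1) m)
  rw [isQuasipolarity_iff_of_comp_self_eq_id hinv, exists_affineMap_eq_self_iff,
    Int.natCast_dvd_natCast, eq_comm]
  exact (Nat.eq_two_mul_iff_not_dvd hwpos hwg hgw).symm

theorem stmt10 (m : ℕ) (hm : 0 < m) (hme : Even m) (r : ℤ)
    (hr : r ^ 2 ≡ 1 [ZMOD (m : ℤ)]) (w : ℕ) (hw : w = m / Int.gcd (r + 1) (m : ℤ)) :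
    IsQuasipolarity m (w : ℤ) r ↔
      2 * (m / Int.gcd (r + 1) (m : ℤ)) = Int.gcd (r - 1) (m : ℤ) :=
  stmt10_general m hm r hr w hw
end
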